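/- Let f be an E-polynomial with pseudo-degree pdeg(f) = (m₀, n₀), and suppose the polynomial F defining f has deg_X(F) = d₀. If δ = deg(h), then the pseudo-derivative pder(f) is defined by a polynomial with degree in X bounded by d₀ + δ − 1, and pdeg(pder(f)) = (m₀, n₀ − 1) if n₀ ≠ 0, while if n₀ = 0 then pdeg(pder(f)) = (m₀', n₀') with m₀' ≤ m₀ − 1 and n₀' ≤ d₀ + δ − 1. In particular, pdeg(pder(f)) < pdeg(f) in the lexicographic order whenever f is not constant. -/

import Mathlib

noncomputable section

/-- Evaluation of a bivariate integer polynomial (a polynomial in `Y` with coefficients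
in `ℤ[X]`) at `(x, y) ∈ ℝ²`. -/
def ev (P : Polynomial (Polynomial ℤ)) (x y : ℝ) : ℝ :=
  Polynomial.eval₂ (Polynomial.eval₂RingHom (Int.castRingHom ℝ) x) y P

/-- The E-polynomial `x ↦ F(x, e^{h(x)})`. -/
def epoly (h : Polynomial ℤ) (F : Polynomial (Polynomial ℤ)) (x : ℝ) : ℝ :=
  ev F x (Real.exp (Polynomial.eval₂ (Int.castRingHom ℝ) x h))

/-- Partial derivative with respect to `X` (the inner variable). -/
def dX (P : Polynomial (Polynomial ℤ)) : Polynomial (Polynomial ℤ) :=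
  P.sum fun n c => Polynomial.C (Polynomial.derivative c) * Polynomial.X ^ n

/-- The polynomial `F̃ = ∂F/∂X + (∂F/∂Y)·h'(X)·Y` defining the derivative of the
E-polynomial `x ↦ F(x, e^{h(x)})`. -/
def FtildeE (h : Polynomial ℤ) (F : Polynomial (Polynomial ℤ)) : Polynomial (Polynomial ℤ) :=
  dX F + Polynomial.derivative F * (Polynomial.C (Polynomial.derivative h) * Polynomial.X)

/-- The pseudo-derivative at the level of defining polynomials: it is `F̃` when
`deg_X F(X,0) > 0`; when `F(X,0)` is constant and `F̃ ≠ 0` it is `F̃` divided by the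
largest power `Y^k` dividing it; and it is `0` when `F̃ = 0`. -/
def pderPoly (h : Polynomial ℤ) (F : Polynomial (Polynomial ℤ)) : Polynomial (Polynomial ℤ) :=
  let Ft := FtildeE h F
  if Ft = 0 then 0
  else if 0 < (F.coeff 0).natDegree then Ft
  else Polynomial.divX^[Ft.natTrailingDegree] Ft

/-- Total degree of a bivariate polynomial written in `ℤ[X][Y]`. -/
def tdeg (P : Polynomial (Polynomial ℤ)) : ℕ :=
  P.support.sup fun n => n + (P.coeff n).natDegree

/-- Degree in `X` of a bivariate polynomial written in `ℤ[X][Y]`. -/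
def degX (P : Polynomial (Polynomial ℤ)) : ℕ :=
  P.support.sup fun n => (P.coeff n).natDegree

/-!
Writing `a_n` for the coefficient of `Yⁿ` in `F`, the coefficient of `Yⁿ` in `F̃` is
`a_n' + n a_n h'`. Its `X`-degree is at most `deg a_n + δ - 1`, and for `n ≠ 0`, `a_n ≠ 0` it
does not vanish, because `deg (n a_n h') ≥ deg a_n > deg a_n'`. Hence `F̃` has the same
`Y`-degree as `F` and constant coefficient `a_0'`. If `deg a_0 > 0` the pseudo-derivative is `F̃`,
with pseudo-degree `(m₀, n₀ - 1)`; otherwise `a_0' = 0`, so `Y` divides `F̃`, and dividing out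
`Y^k` lowers the `Y`-degree below `m₀`.
-/

open Polynomial

theorem Polynomial.derivative_add_mul_natCast_mul_derivative_ne_zero {R : Type*} [CommRing R]
    [IsDomain R] [CharZero R] {a h : R[X]} {n : ℕ} (ha : a ≠ 0) (hn : n ≠ 0)
    (hh : 0 < h.natDegree) : derivative a + a * (n : R[X]) * derivative h ≠ 0 := by
  have hh' : derivative h ≠ 0 := fun h0 => by
    rw [derivative_eq_zero] at h0
    omega
  have hlt : (derivative a).degree < (a * (n : R[X]) * derivative h).degree :=
    calc (derivative a).degree < a.degree := degree_derivative_lt ha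
      _ ≤ (a * ((n : R[X]) * derivative h)).degree :=
        degree_le_mul_left a (mul_ne_zero (Nat.cast_ne_zero.2 hn) hh')
      _ = (a * (n : R[X]) * derivative h).degree := by rw [mul_assoc]
  intro hsum
  rw [eq_neg_of_add_eq_zero_left hsum, degree_neg] at hlt
  exact lt_irrefl _ hlt

theorem Polynomial.coeff_divX_iterate {R : Type*} [Semiring R] (p : R[X]) (k n : ℕ) :
    (divX^[k] p).coeff n = p.coeff (n + k) := by
  induction k generalizing p with
  | zero => rfl
  | succ k ih => rw [Function.iterate_succ_apply, ih, coeff_divX, add_assoc]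

theorem Polynomial.natDegree_divX_iterate {R : Type*} [Semiring R] (p : R[X]) (k : ℕ) :
    (divX^[k] p).natDegree = p.natDegree - k := by
  induction k with
  | zero => rfl
  | succ k ih =>
    rw [Function.iterate_succ_apply', natDegree_divX_eq_natDegree_tsub_one, ih, Nat.sub_sub]

theorem natDegree_coeff_le_degX (P : Polynomial (Polynomial ℤ)) (n : ℕ) :
    (P.coeff n).natDegree ≤ degX P := by
  by_cases hn : n ∈ P.support
  · exact Finset.le_sup (f := fun n => (P.coeff n).natDegree) hn
  · simp [Polynomial.notMem_support_iff.mp hn]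

theorem degX_le {P : Polynomial (Polynomial ℤ)} {B : ℕ}
    (hB : ∀ n, (P.coeff n).natDegree ≤ B) : degX P ≤ B :=
  Finset.sup_le fun n _ => hB n

theorem degX_divX_iterate_le (P : Polynomial (Polynomial ℤ)) (k : ℕ) :
    degX (divX^[k] P) ≤ degX P :=
  degX_le fun n => by
    rw [coeff_divX_iterate]
    exact natDegree_coeff_le_degX P _

theorem coeff_dX (F : Polynomial (Polynomial ℤ)) (n : ℕ) :
    (dX F).coeff n = derivative (F.coeff n) := by
  simp only [dX, Polynomial.sum, finsetSum_coeff, coeff_C_mul, coeff_X_pow, mul_ite, mul_one,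
    mul_zero, Finset.sum_ite_eq, mem_support_iff, ne_eq, ite_not, ite_eq_right_iff]
  intro h0
  rw [h0, derivative_zero]

theorem coeff_FtildeE (h : Polynomial ℤ) (F : Polynomial (Polynomial ℤ)) (n : ℕ) :
    (FtildeE h F).coeff n
      = derivative (F.coeff n) + F.coeff n * (n : Polynomial ℤ) * derivative h := by
  rw [FtildeE, coeff_add, coeff_dX, ← mul_assoc]
  congr 1
  cases n with
  | zero => simp [mul_coeff_zero]
  | succ m =>
    rw [coeff_mul_X, coeff_mul_C, coeff_derivative]
    push_cast
    ring

theorem coeff_zero_FtildeE (h : Polynomial ℤ) (F : Polynomial (Polynomial ℤ)) :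
    (FtildeE h F).coeff 0 = derivative (F.coeff 0) := by
  simp [coeff_FtildeE]

theorem degX_FtildeE_le (h : Polynomial ℤ) (F : Polynomial (Polynomial ℤ)) :
    degX (FtildeE h F) ≤ degX F + h.natDegree - 1 :=
  degX_le fun n => by
    have ha := natDegree_coeff_le_degX F n
    have hda := natDegree_derivative_le (F.coeff n)
    rw [coeff_FtildeE]
    refine (natDegree_add_le _ _).trans (max_le (by omega) ?_)
    by_cases hh : h.natDegree = 0
    · simp [derivative_eq_zero.2 hh]
    · have hdh := natDegree_derivative_le h
      have hprod := natDegree_mul_le (p := F.coeff n * (n : Polynomial ℤ)) (q := derivative h)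
      have hcast := natDegree_mul_le (p := F.coeff n) (q := (n : Polynomial ℤ))
      rw [natDegree_natCast] at hcast
      omega

theorem natDegree_FtildeE_le (h : Polynomial ℤ) (F : Polynomial (Polynomial ℤ)) :
    (FtildeE h F).natDegree ≤ F.natDegree :=
  natDegree_le_iff_coeff_eq_zero.2 fun N hN => by
    simp [coeff_FtildeE, coeff_eq_zero_of_natDegree_lt hN]

theorem natDegree_FtildeE {h : Polynomial ℤ} {F : Polynomial (Polynomial ℤ)}
    (hh : 0 < h.natDegree) (hF : 0 < (F.coeff 0).natDegree) :
    (FtildeE h F).natDegree = F.natDegree := by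
  refine le_antisymm (natDegree_FtildeE_le h F) (le_natDegree_of_ne_zero ?_)
  by_cases hm : F.natDegree = 0
  · rw [hm, coeff_zero_FtildeE]
    exact fun h0 => by rw [derivative_eq_zero] at h0; omega
  · have hF0 : F ≠ 0 := fun h0 => by simp [h0] at hF
    rw [coeff_FtildeE]
    exact derivative_add_mul_natCast_mul_derivative_ne_zero (leadingCoeff_ne_zero.2 hF0) hm hh

theorem pderPoly_eq_FtildeE {h : Polynomial ℤ} {F : Polynomial (Polynomial ℤ)}
    (hF : 0 < (F.coeff 0).natDegree) : pderPoly h F = FtildeE h F := by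
  simp only [pderPoly, hF, if_true, ite_eq_right_iff]
  exact Eq.symm

theorem pderPoly_eq_divX_iterate {h : Polynomial ℤ} {F : Polynomial (Polynomial ℤ)}
    (hF : (F.coeff 0).natDegree = 0) :
    pderPoly h F = divX^[(FtildeE h F).natTrailingDegree] (FtildeE h F) := by
  simp only [pderPoly, hF, lt_irrefl, if_false, ite_eq_right_iff]
  intro h0
  simp [h0]

theorem natDegree_pderPoly_le_pred {h : Polynomial ℤ} {F : Polynomial (Polynomial ℤ)}
    (hF : (F.coeff 0).natDegree = 0) : (pderPoly h F).natDegree ≤ F.natDegree - 1 := by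
  rw [pderPoly_eq_divX_iterate hF, natDegree_divX_iterate]
  have hle := natDegree_FtildeE_le h F
  by_cases h0 : FtildeE h F = 0
  · simp [h0]
  · have hc : (FtildeE h F).coeff 0 = 0 := by
      obtain ⟨c, hc⟩ := natDegree_eq_zero.1 hF
      rw [coeff_zero_FtildeE, ← hc, derivative_C]
    have := natTrailingDegree_ne_zero.2 ⟨h0, hc⟩
    omega

theorem degX_pderPoly_le (h : Polynomial ℤ) (F : Polynomial (Polynomial ℤ)) :
    degX (pderPoly h F) ≤ degX F + h.natDegree - 1 := by
  rcases Nat.eq_zero_or_pos (F.coeff 0).natDegree with hF | hF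
  · rw [pderPoly_eq_divX_iterate hF]
    exact (degX_divX_iterate_le _ _).trans (degX_FtildeE_le h F)
  · rw [pderPoly_eq_FtildeE hF]
    exact degX_FtildeE_le h F

theorem pder_pseudo_degree_general (h : Polynomial ℤ) (F : Polynomial (Polynomial ℤ))
    (δ d₀ m₀ n₀ : ℕ) (hδ : h.natDegree = δ) (hδpos : 0 < δ)
    (hd0 : degX F = d₀) (hm0 : F.natDegree = m₀) (hn0 : (F.coeff 0).natDegree = n₀) :
    degX (pderPoly h F) ≤ d₀ + δ - 1 ∧
    (n₀ ≠ 0 →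
      (pderPoly h F).natDegree = m₀ ∧ ((pderPoly h F).coeff 0).natDegree = n₀ - 1) ∧
    (n₀ = 0 →
      (pderPoly h F).natDegree ≤ m₀ - 1 ∧
        ((pderPoly h F).coeff 0).natDegree ≤ d₀ + δ - 1) ∧
    (¬ (∃ c : ℤ, F = Polynomial.C (Polynomial.C c)) →
      toLex ((pderPoly h F).natDegree, ((pderPoly h F).coeff 0).natDegree) <
        toLex (m₀, n₀)) := by
  subst hδ hd0 hm0 hn0
  have hdegX := degX_pderPoly_le h F
  have hcoeff0 := (natDegree_coeff_le_degX (pderPoly h F) 0).trans hdegX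
  rcases Nat.eq_zero_or_pos (F.coeff 0).natDegree with hF | hF
  · have hm := natDegree_pderPoly_le_pred (h := h) hF
    refine ⟨hdegX, by omega, fun _ => ⟨hm, hcoeff0⟩, fun hconst => ?_⟩
    have hm0 : F.natDegree ≠ 0 := fun hm0 => hconst ⟨_,
      (eq_C_of_natDegree_eq_zero hm0).trans (congrArg C (eq_C_of_natDegree_eq_zero hF))⟩
    rw [Prod.Lex.toLex_lt_toLex]
    exact .inl (by omega)
  · have hpder : (pderPoly h F).coeff 0 = derivative (F.coeff 0) := by
      rw [pderPoly_eq_FtildeE hF, coeff_zero_FtildeE]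
    have hnat : (pderPoly h F).natDegree = F.natDegree := by
      rw [pderPoly_eq_FtildeE hF, natDegree_FtildeE hδpos hF]
    have hder := natDegree_derivative (F.coeff 0)
    refine ⟨hdegX, fun _ => ⟨hnat, by rw [hpder, hder]⟩, by omega, fun _ => ?_⟩
    rw [hnat, hpder, hder, Prod.Lex.toLex_lt_toLex]
    exact .inr ⟨rfl, by omega⟩

theorem pder_pseudo_degree (h : Polynomial ℤ) (F : Polynomial (Polynomial ℤ)) (hF : F ≠ 0)
    (δ d₀ m₀ n₀ : ℕ) (hδ : h.natDegree = δ) (hδpos : 0 < δ)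
    (hd0 : degX F = d₀) (hm0 : F.natDegree = m₀) (hn0 : (F.coeff 0).natDegree = n₀) :
    degX (pderPoly h F) ≤ d₀ + δ - 1 ∧
    (n₀ ≠ 0 →
      (pderPoly h F).natDegree = m₀ ∧ ((pderPoly h F).coeff 0).natDegree = n₀ - 1) ∧
    (n₀ = 0 →
      (pderPoly h F).natDegree ≤ m₀ - 1 ∧
        ((pderPoly h F).coeff 0).natDegree ≤ d₀ + δ - 1) ∧
    (¬ (∃ c : ℤ, F = Polynomial.C (Polynomial.C c)) →
      toLex ((pderPoly h F).natDegree, ((pderPoly h F).coeff 0).natDegree) <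
        toLex (m₀, n₀)) :=
  pder_pseudo_degree_general h F δ d₀ m₀ n₀ hδ hδpos hd0 hm0 hn0

end
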